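/- Let X and Y be two density operators on a d-dimensional complex Hilbert space with ‖X − Y‖₁ ≤ μ < 1/e. Then |S(X) − S(Y)| ≤ μ log d − μ log μ, where S denotes the von Neumann entropy. -/

import Mathlib

/-!
Writing `η(x) = -x log x`, the entropy of a density matrix is `∑ η` of its eigenvalues, so the
theorem reduces to the classical Fannes inequality once the spectra, listed in decreasing order,
are shown to be `ℓ¹`-close: `∑ |λᵢ(X) - λᵢ(Y)| ≤ ‖X - Y‖₁`. For this write `X - Y = P - N` with
`P, N ≥ 0` and `tr (P + N) = ‖X - Y‖₁`; then `M = Y + P = X + N` dominates both `X` and `Y`, so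
by Weyl monotonicity `|λᵢ(X) - λᵢ(Y)| ≤ 2 λᵢ(M) - λᵢ(X) - λᵢ(Y)`, and the right-hand sides sum
to `tr (P + N)`. The classical inequality combines the pointwise bound
`|η(a) - η(b)| ≤ η(|a - b|)` (valid when `|a - b| ≤ 1/e`), Jensen's inequality
`∑ η(εᵢ) ≤ η(ε) + ε log d` for `ε = ∑ εᵢ`, and the monotonicity of `η` on `[0, 1/e]`.
-/

open scoped BigOperators
open Matrix Filter Topology
open scoped ComplexOrder

/-- The positive semidefinite square root of a positive semidefinite matrix
(the definition `Matrix.PosSemidef.sqrt` of the older Mathlib, since removed). -/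
noncomputable def Matrix.PosSemidef.sqrt {n 𝕜 : Type*} [Fintype n] [DecidableEq n] [RCLike 𝕜]
    {A : Matrix n n 𝕜} (hA : A.PosSemidef) : Matrix n n 𝕜 :=
  (hA.1.eigenvectorUnitary : Matrix n n 𝕜) * diagonal ((↑) ∘ (Real.sqrt ∘ hA.1.eigenvalues)) *
    (star hA.1.eigenvectorUnitary : Matrix n n 𝕜)

/-- Trace norm (sum of singular values) of a complex matrix. -/
noncomputable def traceNorm {ι : Type*} [Fintype ι] [DecidableEq ι]
    (A : Matrix ι ι ℂ) : ℝ :=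
  ((Matrix.posSemidef_conjTranspose_mul_self A).sqrt.trace).re

/-- A density operator: positive semidefinite with unit trace. -/
def IsDensity {ι : Type*} [Fintype ι] (ρ : Matrix ι ι ℂ) : Prop :=
  ρ.PosSemidef ∧ ρ.trace = 1

/-- Von Neumann entropy `S(ρ) = -tr(ρ log ρ)` (base-2 logarithm), via eigenvalues. -/
noncomputable def vnEntropy {ι : Type*} [Fintype ι] [DecidableEq ι]
    (ρ : Matrix ι ι ℂ) : ℝ :=
  if h : ρ.IsHermitian then -∑ i, h.eigenvalues i * Real.logb 2 (h.eigenvalues i) else 0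

/-- Holevo quantity `χ(P, {ρ_x})`. -/
noncomputable def holevo {X ι : Type*} [Fintype X] [Fintype ι] [DecidableEq ι]
    (P : X → ℝ) (ρ : X → Matrix ι ι ℂ) : ℝ :=
  vnEntropy (∑ x, (P x : ℂ) • ρ x) - ∑ x, P x * vnEntropy (ρ x)

/-- The set of probability distributions on a finite type. -/
def FinDist (α : Type*) [Fintype α] : Type _ :=
  {p : α → ℝ // (∀ a, 0 ≤ p a) ∧ ∑ a, p a = 1}

/-- Tensor-product state corresponding to a codeword and a state sequence. -/
noncomputable def prodState {d n : ℕ} {X Θ' : Type*}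
    (ρ : X → Θ' → Matrix (Fin d) (Fin d) ℂ) (c : Fin n → X) (t : Fin n → Θ') :
    Matrix (Fin n → Fin d) (Fin n → Fin d) ℂ :=
  fun a b => ∏ i, ρ (c i) (t i) (a i) (b i)

/-- A POVM: positive semidefinite operators summing to the identity. -/
def IsPOVM {ι κ : Type*} [Fintype ι] [DecidableEq ι] [Fintype κ]
    (D : κ → Matrix ι ι ℂ) : Prop :=
  (∀ j, (D j).PosSemidef) ∧ ∑ j, D j = 1

/-- Average decoding error of a code under state sequence `t`. -/
noncomputable def avgError {d n : ℕ} {X Θ' : Type*} {J : ℕ}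
    (ρ : X → Θ' → Matrix (Fin d) (Fin d) ℂ)
    (c : Fin J → Fin n → X)
    (D : Fin J → Matrix (Fin n → Fin d) (Fin n → Fin d) ℂ)
    (t : Fin n → Θ') : ℝ :=
  1 - (1 / (J : ℝ)) * ∑ j, ((prodState ρ (c j) t * D j).trace).re

/-- Holevo quantity of an ensemble with uniform distribution. -/
noncomputable def uniformHolevo {ι : Type*} [Fintype ι] [DecidableEq ι] {J : ℕ}
    (τ : Fin J → Matrix ι ι ℂ) : ℝ :=
  vnEntropy ((J : ℂ)⁻¹ • ∑ j, τ j) - (1 / (J : ℝ)) * ∑ j, vnEntropy (τ j)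

/-- Symmetrizability of a classical-quantum arbitrarily varying channel. -/
def Symmetrizable {d : ℕ} {X Θ' : Type*} [Fintype X] [Fintype Θ']
    (ρ : X → Θ' → Matrix (Fin d) (Fin d) ℂ) : Prop :=
  ∃ U : X → Θ' → ℝ, (∀ x, (∀ t, 0 ≤ U x t) ∧ ∑ t, U x t = 1) ∧
    ∀ x x', ∑ t, (U x t : ℂ) • ρ x' t = ∑ t, (U x' t : ℂ) • ρ x t

/-- `R` is an achievable secrecy rate for the cq arbitrarily varying wiretap channel (no CSI). -/
def AchievableSecrecyRate {d : ℕ} {X Θ' : Type*} [Fintype X] [Fintype Θ']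
    (ρ σ : X → Θ' → Matrix (Fin d) (Fin d) ℂ) (R : ℝ) : Prop :=
  ∀ ε > (0:ℝ), ∀ δ > (0:ℝ), ∀ ζ > (0:ℝ), ∃ N : ℕ, ∀ n ≥ N,
    ∃ J : ℕ, 0 < J ∧ ∃ c : Fin J → Fin n → X,
      ∃ D : Fin J → Matrix (Fin n → Fin d) (Fin n → Fin d) ℂ, IsPOVM D ∧
        Real.logb 2 J / n > R - δ ∧
        (∀ t : Fin n → Θ', avgError ρ c D t < ε) ∧
        (∀ t : Fin n → Θ',
          (1 / (n : ℝ)) * uniformHolevo (fun j => prodState σ (c j) t) < ζ)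

/-- `R` is an achievable secrecy rate with CSI at the transmitter. -/
def AchievableSecrecyRateCSI {d : ℕ} {X Θ' : Type*} [Fintype X] [Fintype Θ']
    (ρ σ : X → Θ' → Matrix (Fin d) (Fin d) ℂ) (R : ℝ) : Prop :=
  ∀ ε > (0:ℝ), ∀ δ > (0:ℝ), ∀ ζ > (0:ℝ), ∃ N : ℕ, ∀ n ≥ N,
    ∃ J : ℕ, 0 < J ∧ ∃ c : (Fin n → Θ') → Fin J → Fin n → X,
      ∃ D : Fin J → Matrix (Fin n → Fin d) (Fin n → Fin d) ℂ, IsPOVM D ∧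
        Real.logb 2 J / n > R - δ ∧
        (∀ t : Fin n → Θ', avgError ρ (c t) D t < ε) ∧
        (∀ t : Fin n → Θ',
          (1 / (n : ℝ)) * uniformHolevo (fun j => prodState σ (c t j) t) < ζ)

/-- Secrecy capacity (no CSI). -/
noncomputable def secrecyCapacity {d : ℕ} {X Θ' : Type*} [Fintype X] [Fintype Θ']
    (ρ σ : X → Θ' → Matrix (Fin d) (Fin d) ℂ) : ℝ :=
  sSup {R : ℝ | 0 ≤ R ∧ AchievableSecrecyRate ρ σ R}

/-- Secrecy capacity with CSI at the transmitter. -/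
noncomputable def secrecyCapacityCSI {d : ℕ} {X Θ' : Type*} [Fintype X] [Fintype Θ']
    (ρ σ : X → Θ' → Matrix (Fin d) (Fin d) ℂ) : ℝ :=
  sSup {R : ℝ | 0 ≤ R ∧ AchievableSecrecyRateCSI ρ σ R}

/-- An orthogonal projection. -/
def IsProj {ι : Type*} [Fintype ι] (Q : Matrix ι ι ℂ) : Prop :=
  Qᴴ = Q ∧ Q * Q = Q

/-- Spectral projector of a Hermitian matrix onto the eigenvalues lying in `[lo, hi]`. -/
noncomputable def specProj {ι : Type*} [Fintype ι] [DecidableEq ι] {ρ : Matrix ι ι ℂ}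
    (h : ρ.IsHermitian) (lo hi : ℝ) : Matrix ι ι ℂ :=
  (h.eigenvectorUnitary : Matrix ι ι ℂ) *
    Matrix.diagonal
      (fun k => if lo ≤ h.eigenvalues k ∧ h.eigenvalues k ≤ hi then (1 : ℂ) else 0) *
    (h.eigenvectorUnitary : Matrix ι ι ℂ)ᴴ

/-- Tensor product of a family of `d × d` matrices. -/
noncomputable def tensorFam {d n : ℕ} (M : Fin n → Matrix (Fin d) (Fin d) ℂ) :
    Matrix (Fin n → Fin d) (Fin n → Fin d) ℂ :=
  Matrix.of fun a b => ∏ i, M i (a i) (b i)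

open Classical in
noncomputable def invSqrt {ι : Type*} [Fintype ι] [DecidableEq ι]
    (M : Matrix ι ι ℂ) : Matrix ι ι ℂ :=
  if h : M.PosSemidef then (h.sqrt)⁻¹ else 0

open scoped InnerProductSpace MatrixOrder
open Module RCLike Set

namespace LinearMap.IsSymmetric

variable {𝕜 E : Type*} [RCLike 𝕜] [NormedAddCommGroup E] [InnerProductSpace 𝕜 E]
  [FiniteDimensional 𝕜 E] {n : ℕ} (hn : finrank 𝕜 E = n) {T S : E →ₗ[𝕜] E}

theorem re_inner_apply_self_eq_sum (hT : T.IsSymmetric) (v : E) :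
    re ⟪T v, v⟫_𝕜 = ∑ i, hT.eigenvalues hn i * ‖⟪hT.eigenvectorBasis hn i, v⟫_𝕜‖ ^ 2 := by
  rw [← (hT.eigenvectorBasis hn).sum_inner_mul_inner, map_sum]
  refine Finset.sum_congr rfl fun i _ => ?_
  rw [hT, apply_eigenvectorBasis, inner_smul_right, ← inner_conj_symm, mul_assoc,
    RCLike.conj_mul, ← ofReal_pow, ← ofReal_mul, ofReal_re]

theorem inner_eigenvectorBasis_eq_zero_of_mem_span (hT : T.IsSymmetric) {K : Set (Fin n)}
    {v : E} (hv : v ∈ Submodule.span 𝕜 (hT.eigenvectorBasis hn '' K)) {j : Fin n} (hj : j ∉ K) :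
    ⟪hT.eigenvectorBasis hn j, v⟫_𝕜 = 0 := by
  suffices Submodule.span 𝕜 (hT.eigenvectorBasis hn '' K) ≤
      LinearMap.ker (innerₛₗ 𝕜 (hT.eigenvectorBasis hn j)) from this hv
  rw [Submodule.span_le]
  rintro _ ⟨k, hk, rfl⟩
  have hjk : j ≠ k := by rintro rfl; exact hj hk
  simp [orthonormal_iff_ite.mp (hT.eigenvectorBasis hn).orthonormal, hjk]

theorem finrank_span_eigenvectorBasis (hT : T.IsSymmetric) (K : Finset (Fin n)) :
    finrank 𝕜 (Submodule.span 𝕜 (hT.eigenvectorBasis hn '' K)) = K.card := by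
  have hK : LinearIndependent 𝕜 fun k : (K : Set (Fin n)) => hT.eigenvectorBasis hn k :=
    (hT.eigenvectorBasis hn).orthonormal.linearIndependent.comp _ Subtype.val_injective
  rw [Set.image_eq_range, finrank_span_eq_card hK]
  simp

theorem le_re_inner_of_mem_span (hT : T.IsSymmetric) {K : Set (Fin n)} {r : ℝ}
    (hr : ∀ k ∈ K, r ≤ hT.eigenvalues hn k) {v : E}
    (hv : v ∈ Submodule.span 𝕜 (hT.eigenvectorBasis hn '' K)) :
    r * ‖v‖ ^ 2 ≤ re ⟪T v, v⟫_𝕜 := by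
  rw [hT.re_inner_apply_self_eq_sum hn, ← (hT.eigenvectorBasis hn).sum_sq_norm_inner_right,
    Finset.mul_sum]
  refine Finset.sum_le_sum fun k _ => ?_
  by_cases hk : k ∈ K
  · exact mul_le_mul_of_nonneg_right (hr k hk) (sq_nonneg _)
  · simp [hT.inner_eigenvectorBasis_eq_zero_of_mem_span hn hv hk]

theorem re_inner_le_of_mem_span (hT : T.IsSymmetric) {K : Set (Fin n)} {r : ℝ}
    (hr : ∀ k ∈ K, hT.eigenvalues hn k ≤ r) {v : E}
    (hv : v ∈ Submodule.span 𝕜 (hT.eigenvectorBasis hn '' K)) :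
    re ⟪T v, v⟫_𝕜 ≤ r * ‖v‖ ^ 2 := by
  rw [hT.re_inner_apply_self_eq_sum hn, ← (hT.eigenvectorBasis hn).sum_sq_norm_inner_right,
    Finset.mul_sum]
  refine Finset.sum_le_sum fun k _ => ?_
  by_cases hk : k ∈ K
  · exact mul_le_mul_of_nonneg_right (hr k hk) (sq_nonneg _)
  · simp [hT.inner_eigenvectorBasis_eq_zero_of_mem_span hn hv hk]

/-- Weyl's monotonicity theorem. The span of the eigenvectors of `T` for its `i + 1` largest
eigenvalues and that of the eigenvectors of `S` for its `n - i` smallest ones meet nontrivially. -/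
theorem eigenvalues_le_of_isPositive_sub (hT : T.IsSymmetric) (hS : S.IsSymmetric)
    (hST : (S - T).IsPositive) (i : Fin n) : hT.eigenvalues hn i ≤ hS.eigenvalues hn i := by
  set V := Submodule.span 𝕜 (hT.eigenvectorBasis hn '' ↑(Finset.Iic i))
  set W := Submodule.span 𝕜 (hS.eigenvectorBasis hn '' ↑(Finset.Ici i))
  obtain ⟨v, ⟨hvV, hvW⟩, hv0⟩ : ∃ v ∈ V ⊓ W, v ≠ 0 := by
    refine Submodule.exists_mem_ne_zero_of_ne_bot fun h => ?_
    have hsum := Submodule.finrank_sup_add_finrank_inf_eq V W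
    have hle := Submodule.finrank_le (V ⊔ W)
    rw [h, finrank_bot, hT.finrank_span_eigenvectorBasis, hS.finrank_span_eigenvectorBasis,
      Fin.card_Iic, Fin.card_Ici] at hsum
    omega
  have hTv : hT.eigenvalues hn i * ‖v‖ ^ 2 ≤ re ⟪T v, v⟫_𝕜 :=
    hT.le_re_inner_of_mem_span hn
      (fun k hk => hT.eigenvalues_antitone hn (Finset.mem_Iic.mp hk)) hvV
  have hSv : re ⟪S v, v⟫_𝕜 ≤ hS.eigenvalues hn i * ‖v‖ ^ 2 :=
    hS.re_inner_le_of_mem_span hn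
      (fun k hk => hS.eigenvalues_antitone hn (Finset.mem_Ici.mp hk)) hvW
  have hTS : re ⟪T v, v⟫_𝕜 ≤ re ⟪S v, v⟫_𝕜 := by
    have := hST.re_inner_nonneg_left v
    rw [sub_apply, inner_sub_left, map_sub] at this
    linarith
  exact le_of_mul_le_mul_right (hTv.trans (hTS.trans hSv)) (by positivity)

end LinearMap.IsSymmetric

namespace Matrix.IsHermitian

variable {𝕜 n : Type*} [RCLike 𝕜] [Fintype n] [DecidableEq n] {A B : Matrix n n 𝕜}

theorem eigenvalues₀_eq_eigenvalues (hA : A.IsHermitian) (i : Fin (Fintype.card n)) :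
    hA.eigenvalues₀ i = hA.eigenvalues (Fintype.equivOfCardEq (Fintype.card_fin _) i) := by
  simp [eigenvalues]

theorem sum_comp_eigenvalues₀ (hA : A.IsHermitian) (f : ℝ → ℝ) :
    ∑ i, f (hA.eigenvalues₀ i) = ∑ i, f (hA.eigenvalues i) := by
  simp_rw [hA.eigenvalues₀_eq_eigenvalues]
  exact Equiv.sum_comp _ fun i => f (hA.eigenvalues i)

theorem re_trace_eq_sum_eigenvalues₀ (hA : A.IsHermitian) :
    re A.trace = ∑ i, hA.eigenvalues₀ i := by
  rw [hA.trace_eq_sum_eigenvalues, map_sum]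
  simpa using (hA.sum_comp_eigenvalues₀ id).symm

theorem eigenvalues₀_le_of_posSemidef_sub (hA : A.IsHermitian) (hB : B.IsHermitian)
    (hAB : (B - A).PosSemidef) (i : Fin (Fintype.card n)) :
    hA.eigenvalues₀ i ≤ hB.eigenvalues₀ i :=
  LinearMap.IsSymmetric.eigenvalues_le_of_isPositive_sub _ _ _
    (by rwa [← map_sub, Matrix.isPositive_toEuclideanLin_iff]) i

theorem sum_abs_eigenvalues₀_sub_le (hA : A.IsHermitian) (hB : B.IsHermitian)
    {P N : Matrix n n 𝕜} (hP : P.PosSemidef) (hN : N.PosSemidef) (hAB : A - B = P - N) :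
    ∑ i, |hA.eigenvalues₀ i - hB.eigenvalues₀ i| ≤ re (P + N).trace := by
  have hNeq : N = B + P - A := by rw [← sub_sub_cancel P N, ← hAB]; abel
  subst hNeq
  have hM : (B + P).IsHermitian := hB.add hP.1
  have hAM := hA.eigenvalues₀_le_of_posSemidef_sub hM hN
  have hBM := hB.eigenvalues₀_le_of_posSemidef_sub hM (by rwa [add_sub_cancel_left])
  calc ∑ i, |hA.eigenvalues₀ i - hB.eigenvalues₀ i|
      ≤ ∑ i, (2 * hM.eigenvalues₀ i - hA.eigenvalues₀ i - hB.eigenvalues₀ i) :=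
        Finset.sum_le_sum fun i _ => abs_sub_le_iff.mpr
          ⟨by linarith [hAM i, hBM i], by linarith [hAM i, hBM i]⟩
    _ = 2 * re (B + P).trace - re A.trace - re B.trace := by
        simp only [hM.re_trace_eq_sum_eigenvalues₀, hA.re_trace_eq_sum_eigenvalues₀,
          hB.re_trace_eq_sum_eigenvalues₀, Finset.sum_sub_distrib, Finset.mul_sum]
    _ = re (P + (B + P - A)).trace := by
        simp only [trace_add, trace_sub, map_add, map_sub]
        ring

end Matrix.IsHermitian

theorem traceNorm_eq_re_trace_abs {n : Type*} [Fintype n] [DecidableEq n] (A : Matrix n n ℂ) :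
    traceNorm A = (CFC.abs A).trace.re := by
  have hP := Matrix.posSemidef_conjTranspose_mul_self A
  suffices hP.sqrt = CFC.abs A by rw [traceNorm, this]
  rw [CFC.abs, CFC.sqrt_eq_real_sqrt _ (star_mul_self_nonneg A), Matrix.star_eq_conjTranspose,
    cfcₙ_eq_cfc, hP.1.cfc_eq]
  simp [Matrix.PosSemidef.sqrt, Matrix.IsHermitian.cfc, Function.comp_def]

theorem Matrix.IsHermitian.sum_abs_eigenvalues₀_sub_le_traceNorm {n : Type*} [Fintype n]
    [DecidableEq n] {A B : Matrix n n ℂ} (hA : A.IsHermitian) (hB : B.IsHermitian) :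
    ∑ i, |hA.eigenvalues₀ i - hB.eigenvalues₀ i| ≤ traceNorm (A - B) := by
  have hAB : IsSelfAdjoint (A - B) := hA.sub hB
  rw [traceNorm_eq_re_trace_abs, ← CFC.posPart_add_negPart (A - B)]
  exact hA.sum_abs_eigenvalues₀_sub_le hB (nonneg_iff_posSemidef.mp (CFC.posPart_nonneg _))
    (nonneg_iff_posSemidef.mp (CFC.negPart_nonneg _)) (CFC.posPart_sub_negPart (A - B)).symm

namespace Real

theorem negMulLog_add_le {b s : ℝ} (hb : 0 ≤ b) (hs : 0 ≤ s) :
    negMulLog (b + s) ≤ negMulLog b + negMulLog s := by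
  rcases hb.eq_or_lt with rfl | hb
  · simp
  rcases hs.eq_or_lt with rfl | hs
  · simp
  have hlb : log b ≤ log (b + s) := log_le_log hb (by linarith)
  have hls : log s ≤ log (b + s) := log_le_log hs (by linarith)
  simp only [negMulLog]
  nlinarith [mul_le_mul_of_nonneg_left hlb hb.le, mul_le_mul_of_nonneg_left hls hs.le]

theorem negMulLog_le_negMulLog_add_add {b s : ℝ} (hb : 0 ≤ b) (hs : 0 ≤ s) (hbs : b + s ≤ 1) :
    negMulLog b ≤ negMulLog (b + s) + s := by
  rcases hb.eq_or_lt with rfl | hb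
  · simpa using add_nonneg (negMulLog_nonneg hs (by linarith)) hs
  have hlog : b * (log (b + s) - log b) ≤ s := by
    have h := log_le_sub_one_of_pos (show 0 < (b + s) / b by positivity)
    rw [log_div (by positivity) hb.ne'] at h
    calc b * (log (b + s) - log b) ≤ b * ((b + s) / b - 1) := mul_le_mul_of_nonneg_left h hb.le
      _ = s := by field_simp; ring
  have hneg : s * log (b + s) ≤ 0 :=
    mul_nonpos_of_nonneg_of_nonpos hs (log_nonpos (by positivity) hbs)
  simp only [negMulLog]
  nlinarith

theorem self_le_negMulLog {s : ℝ} (hs : 0 ≤ s) (hse : s ≤ exp (-1)) : s ≤ negMulLog s := by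
  rcases hs.eq_or_lt with rfl | hs
  · simp
  have : log s ≤ -1 := (log_le_iff_le_exp hs).mpr hse
  simp only [negMulLog]
  nlinarith

theorem abs_negMulLog_sub_le {a b : ℝ} (ha : a ∈ Icc 0 1) (hb : b ∈ Icc 0 1)
    (hab : |a - b| ≤ exp (-1)) : |negMulLog a - negMulLog b| ≤ negMulLog |a - b| := by
  wlog hba : b ≤ a generalizing a b
  · rw [abs_sub_comm, abs_sub_comm a] at *
    exact this hb ha hab (le_of_not_ge hba)
  obtain ⟨s, hs, rfl⟩ : ∃ s, 0 ≤ s ∧ a = b + s := ⟨a - b, sub_nonneg.mpr hba, by ring⟩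
  rw [add_sub_cancel_left, abs_of_nonneg hs] at *
  rw [abs_le]
  constructor
  · linarith [negMulLog_le_negMulLog_add_add hb.1 hs ha.2, self_le_negMulLog hs hab]
  · linarith [negMulLog_add_le hb.1 hs]

theorem negMulLog_monotoneOn : MonotoneOn negMulLog (Icc 0 (exp (-1))) := by
  refine monotoneOn_of_deriv_nonneg (convex_Icc _ _) continuous_negMulLog.continuousOn
    (fun x hx => ?_) fun x hx => ?_
  all_goals rw [interior_Icc] at hx
  · exact (differentiableAt_negMulLog_iff.mpr hx.1.ne').differentiableWithinAt
  · rw [deriv_negMulLog hx.1.ne']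
    linarith [(log_le_iff_le_exp hx.1).mpr hx.2.le]

theorem sum_negMulLog_le {ι : Type*} [Fintype ι] {x : ι → ℝ} (hx : ∀ i, 0 ≤ x i) :
    ∑ i, negMulLog (x i) ≤ negMulLog (∑ i, x i) + (∑ i, x i) * log (Fintype.card ι) := by
  rcases isEmpty_or_nonempty ι with hι | hι
  · simp
  set N : ℝ := (Fintype.card ι : ℝ)
  have hN : 0 < N := Nat.cast_pos.mpr Fintype.card_pos
  have hJ := concaveOn_negMulLog.le_map_sum (t := Finset.univ) (w := fun _ => N⁻¹) (p := x)
    (fun _ _ => by positivity) (by simp [N]) (fun i _ => hx i)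
  simp only [smul_eq_mul, ← Finset.mul_sum, negMulLog_mul] at hJ
  rw [show negMulLog N⁻¹ = N⁻¹ * log N by simp [negMulLog, log_inv]] at hJ
  refine le_of_mul_le_mul_left ?_ (inv_pos.mpr hN)
  linarith

theorem abs_sum_negMulLog_sub_le {ι : Type*} [Fintype ι] {p q : ι → ℝ}
    (hp : ∀ i, p i ∈ Icc 0 1) (hq : ∀ i, q i ∈ Icc 0 1) {μ : ℝ} (hμ : μ ≤ exp (-1))
    (hpq : ∑ i, |p i - q i| ≤ μ) :
    |∑ i, negMulLog (p i) - ∑ i, negMulLog (q i)| ≤ μ * log (Fintype.card ι) + negMulLog μ := by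
  set ε := ∑ i, |p i - q i|
  have hε : 0 ≤ ε := Finset.sum_nonneg fun i _ => abs_nonneg _
  have hεi (i : ι) : |p i - q i| ≤ ε :=
    Finset.single_le_sum (fun j _ => abs_nonneg (p j - q j)) (Finset.mem_univ i)
  calc |∑ i, negMulLog (p i) - ∑ i, negMulLog (q i)|
      ≤ ∑ i, |negMulLog (p i) - negMulLog (q i)| := by
        rw [← Finset.sum_sub_distrib]
        exact Finset.abs_sum_le_sum_abs _ _
    _ ≤ ∑ i, negMulLog |p i - q i| := Finset.sum_le_sum fun i _ =>
        abs_negMulLog_sub_le (hp i) (hq i) ((hεi i).trans (hpq.trans hμ))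
    _ ≤ negMulLog ε + ε * log (Fintype.card ι) := sum_negMulLog_le fun i => abs_nonneg _
    _ ≤ μ * log (Fintype.card ι) + negMulLog μ := by
        have := negMulLog_monotoneOn ⟨hε, hpq.trans hμ⟩ ⟨hε.trans hpq, hμ⟩ hpq
        have := mul_le_mul_of_nonneg_right hpq (log_natCast_nonneg (Fintype.card ι))
        linarith

end Real

theorem Matrix.IsHermitian.vnEntropy_eq_sum_negMulLog {n : Type*} [Fintype n] [DecidableEq n]
    {A : Matrix n n ℂ} (hA : A.IsHermitian) :
    vnEntropy A = (∑ i, Real.negMulLog (hA.eigenvalues₀ i)) / Real.log 2 := by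
  rw [vnEntropy, dif_pos hA, hA.sum_comp_eigenvalues₀, Finset.sum_div, ← Finset.sum_neg_distrib]
  refine Finset.sum_congr rfl fun i _ => ?_
  rw [Real.logb, Real.negMulLog]
  ring

theorem IsDensity.eigenvalues₀_mem_Icc {n : Type*} [Fintype n] [DecidableEq n]
    {ρ : Matrix n n ℂ} (hρ : IsDensity ρ) (i : Fin (Fintype.card n)) :
    hρ.1.1.eigenvalues₀ i ∈ Icc 0 1 := by
  have h0 (j : Fin (Fintype.card n)) : 0 ≤ hρ.1.1.eigenvalues₀ j := by
    rw [Matrix.IsHermitian.eigenvalues₀_eq_eigenvalues]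
    exact hρ.1.eigenvalues_nonneg _
  have hsum : ∑ j, hρ.1.1.eigenvalues₀ j = 1 := by
    rw [← hρ.1.1.re_trace_eq_sum_eigenvalues₀, hρ.2, one_re]
  exact ⟨h0 i, hsum ▸ Finset.single_le_sum (fun j _ => h0 j) (Finset.mem_univ i)⟩

theorem fannes_inequality_general {d : ℕ} (X Y : Matrix (Fin d) (Fin d) ℂ)
    (hX : IsDensity X) (hY : IsDensity Y) (μ : ℝ)
    (hdist : traceNorm (X - Y) ≤ μ) (hμe : μ < 1 / Real.exp 1) :
    |vnEntropy X - vnEntropy Y| ≤ μ * Real.logb 2 d - μ * Real.logb 2 μ := by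
  have hμ : μ ≤ Real.exp (-1) := by rw [Real.exp_neg, inv_eq_one_div]; exact hμe.le
  have hclassical := Real.abs_sum_negMulLog_sub_le hX.eigenvalues₀_mem_Icc
    hY.eigenvalues₀_mem_Icc hμ ((hX.1.1.sum_abs_eigenvalues₀_sub_le_traceNorm hY.1.1).trans hdist)
  have hlog2 : 0 < Real.log 2 := Real.log_pos one_lt_two
  have hrhs : (μ * Real.logb 2 d - μ * Real.logb 2 μ) * Real.log 2
      = μ * Real.log d + Real.negMulLog μ := by
    rw [Real.logb, Real.logb, Real.negMulLog]
    field_simp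
    ring
  rw [hX.1.1.vnEntropy_eq_sum_negMulLog, hY.1.1.vnEntropy_eq_sum_negMulLog, ← sub_div, abs_div,
    abs_of_pos hlog2, div_le_iff₀ hlog2, hrhs]
  simpa using hclassical

/-- **Fannes inequality.** For density operators `X, Y` on a `d`-dimensional space with
`‖X - Y‖₁ ≤ μ < 1/e`, one has `|S(X) - S(Y)| ≤ μ log d - μ log μ`. -/
theorem fannes_inequality {d : ℕ} (X Y : Matrix (Fin d) (Fin d) ℂ)
    (hX : IsDensity X) (hY : IsDensity Y) (μ : ℝ) (hμ0 : 0 < μ)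
    (hdist : traceNorm (X - Y) ≤ μ) (hμe : μ < 1 / Real.exp 1) :
    |vnEntropy X - vnEntropy Y| ≤ μ * Real.logb 2 d - μ * Real.logb 2 μ :=
  fannes_inequality_general X Y hX hY μ hdist hμe
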